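/- arXiv:1202.0986 — 3 statements merged into one kernel-verified Lean document; each statement's English description precedes it below -/
import Mathlib

section
/- There exists an absolute constant K > 0 such that for every integer m ≥ 2 there is a single m×m diagonal matrix B, with all diagonal entries in the square Q, with the following property: for every m×m complex matrix A all of whose diagonal entries are zero, there exists an m×m complex matrix C with A = BC − CB and ‖C‖ ≤ K · (log m)³ · √m · ‖A‖. (The matrix B depends only on m, not on A.) -/
noncomputable def opNorm {ι κ : Type*} [Fintype ι] [Fintype κ] [DecidableEq κ]
    (A : Matrix ι κ ℂ) : ℝ :=
  ‖LinearMap.toContinuousLinearMap (Matrix.toEuclideanLin A)‖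

def Qsq : Set ℂ := {z : ℂ | |z.re| ≤ 1 ∧ |z.im| ≤ 1}

/-!
Take the `m` points `d i = (a + b i) / n`, `0 ≤ a, b < n = ⌊√m⌋ + 1`, of a square grid. Since `A`
has zero diagonal, `C = [(d i - d j)⁻¹] ⊙ A` (entrywise product) solves `A = D C - C D`, so
everything rests on bounding the Schur multiplier norm of the Cauchy matrix `[(z i - z j)⁻¹]` of the
Gaussian integers `z = a + b i` by `π + 2 H_{n-1} = O(log m)`.

Schur multipliers are bounded by `1` when rank one with unimodular factors (`diag u * A * diag v`),
and their bounds are subadditive, submultiplicative under `⊙` and integrate. Split the Cauchy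
matrix by the value `k` of `a i - a j`. The indicator of that block is an average of characters of
`ZMod (2n - 1)`, so has bound `1`; and `(k + l i)⁻¹ = ∫₀^{2π} ψ_k(θ) e^{-ilθ} dθ` for an explicit
kernel `ψ_k` (an exponential for `k ≠ 0`, a sawtooth for `k = 0`) with `‖ψ_k‖₁ ≤ 1 / |k|`
(`π` for `k = 0`), which writes the block as an integral of rank-one unimodular multipliers.
Summing over `|k| < n` gives the harmonic number.
-/

open Matrix MeasureTheory Real Complex
open scoped Matrix.Norms.L2Operator

section SchurMultiplier

variable {ι κ : Type*} [Fintype ι] [Fintype κ] [DecidableEq κ]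

def IsSchurMultiplierBound (M : Matrix ι κ ℂ) (c : ℝ) : Prop :=
  ∀ A : Matrix ι κ ℂ, ‖M ⊙ A‖ ≤ c * ‖A‖

namespace IsSchurMultiplierBound

variable {M N : Matrix ι κ ℂ} {c d : ℝ}

theorem mono (hM : IsSchurMultiplierBound M c) (hcd : c ≤ d) : IsSchurMultiplierBound M d :=
  fun A => (hM A).trans (mul_le_mul_of_nonneg_right hcd (norm_nonneg A))

theorem smul (hM : IsSchurMultiplierBound M c) (z : ℂ) :
    IsSchurMultiplierBound (z • M) (‖z‖ * c) := fun A => by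
  rw [smul_hadamard, mul_assoc]
  exact (norm_smul_le z _).trans (mul_le_mul_of_nonneg_left (hM A) (norm_nonneg z))

theorem hadamard (hM : IsSchurMultiplierBound M c) (hN : IsSchurMultiplierBound N d)
    (hc : 0 ≤ c) : IsSchurMultiplierBound (M ⊙ N) (c * d) := fun A => by
  rw [hadamard_assoc, mul_assoc]
  exact (hM _).trans (mul_le_mul_of_nonneg_left (hN A) hc)

end IsSchurMultiplierBound

theorem isSchurMultiplierBound_sum {α : Type*} (s : Finset α) {M : α → Matrix ι κ ℂ}
    {c : α → ℝ} (h : ∀ a ∈ s, IsSchurMultiplierBound (M a) (c a)) :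
    IsSchurMultiplierBound (∑ a ∈ s, M a) (∑ a ∈ s, c a) := fun A => by
  rw [show (∑ a ∈ s, M a) ⊙ A = ∑ a ∈ s, M a ⊙ A by ext; simp [Matrix.sum_apply, Finset.sum_mul],
    Finset.sum_mul]
  exact (norm_sum_le _ _).trans (Finset.sum_le_sum fun a ha => h a ha A)

theorem vecMulVec_hadamard [DecidableEq ι] (u : ι → ℂ) (v : κ → ℂ)
    (A : Matrix ι κ ℂ) : vecMulVec u v ⊙ A = diagonal u * A * diagonal v := by
  ext i j
  simp [vecMulVec_apply, mul_comm, mul_left_comm]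

theorem isSchurMultiplierBound_vecMulVec [DecidableEq ι] {u : ι → ℂ} {v : κ → ℂ}
    (hu : ∀ i, ‖u i‖ ≤ 1) (hv : ∀ j, ‖v j‖ ≤ 1) : IsSchurMultiplierBound (vecMulVec u v) 1 :=
  fun A => by
  rw [vecMulVec_hadamard, one_mul]
  have hu' : ‖diagonal u‖ ≤ 1 := by
    rw [l2_opNorm_diagonal]; exact (pi_norm_le_iff_of_nonneg zero_le_one).mpr hu
  have hv' : ‖diagonal v‖ ≤ 1 := by
    rw [l2_opNorm_diagonal]; exact (pi_norm_le_iff_of_nonneg zero_le_one).mpr hv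
  calc ‖diagonal u * A * diagonal v‖ ≤ ‖diagonal u‖ * ‖A‖ * ‖diagonal v‖ :=
        (l2_opNorm_mul _ _).trans (mul_le_mul_of_nonneg_right (l2_opNorm_mul _ _) (norm_nonneg _))
    _ ≤ 1 * ‖A‖ * 1 := by gcongr
    _ = ‖A‖ := by ring

theorem intervalIntegral_matrix_apply {M : ℝ → Matrix ι κ ℂ} {a b : ℝ}
    (hM : IntervalIntegrable M volume a b) (i : ι) (j : κ) :
    (∫ θ in a..b, M θ) i j = ∫ θ in a..b, M θ i j :=
  (LinearMap.toContinuousLinearMap (entryLinearMap ℂ ℂ i j)).intervalIntegral_comp_comm hM |>.symm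

theorem isSchurMultiplierBound_intervalIntegral {M : ℝ → Matrix ι κ ℂ} {c : ℝ → ℝ} {a b : ℝ}
    (hab : a ≤ b) (hM : Continuous M) (hc : IntervalIntegrable c volume a b)
    (h : ∀ θ ∈ Set.Icc a b, IsSchurMultiplierBound (M θ) (c θ)) :
    IsSchurMultiplierBound (∫ θ in a..b, M θ) (∫ θ in a..b, c θ) := fun A => by
  have hMA : Continuous fun θ => M θ ⊙ A :=
    continuous_pi fun i => continuous_pi fun j => (hM.matrix_elem i j).mul continuous_const
  rw [show (∫ θ in a..b, M θ) ⊙ A = ∫ θ in a..b, M θ ⊙ A by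
    ext i j
    simp only [hadamard_apply, intervalIntegral_matrix_apply (hM.intervalIntegrable a b),
      intervalIntegral_matrix_apply (hMA.intervalIntegrable a b),
      intervalIntegral.integral_mul_const],
    ← intervalIntegral.integral_mul_const]
  refine intervalIntegral.norm_integral_le_of_norm_le hab (Filter.Eventually.of_forall
    fun θ hθ => h θ (Set.Ioc_subset_Icc_self hθ) A) (hc.mul_const _)

theorem isSchurMultiplierBound_indicator_sub_eq [DecidableEq ι] {N : ℕ} [NeZero N]
    (p : ι → ZMod N) (q : κ → ZMod N) (a : ZMod N) :
    IsSchurMultiplierBound (of fun i j => if p i - q j = a then (1 : ℂ) else 0) 1 := by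
  set ψ : AddChar (ZMod N) ℂ := ZMod.stdAddChar
  have hsum : (of fun i j => if p i - q j = a then (1 : ℂ) else 0) = (N : ℂ)⁻¹ •
      ∑ s : ZMod N, ψ (-(s * a)) • vecMulVec (fun i => ψ (s * p i)) (fun j => ψ (-(s * q j))) := by
    ext i j
    have hN : (N : ℂ) ≠ 0 := NeZero.ne _
    have hterm (s : ZMod N) : ψ (-(s * a)) * (ψ (s * p i) * ψ (-(s * q j))) =
        ψ (s * (p i - q j - a)) := by
      rw [← AddChar.map_add_eq_mul, ← AddChar.map_add_eq_mul]; ring_nf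
    simp only [of_apply, Matrix.smul_apply, Matrix.sum_apply, vecMulVec_apply, smul_eq_mul, hterm]
    rw [AddChar.sum_mulShift _ (ZMod.isPrimitive_stdAddChar N), ZMod.card]
    simp only [sub_eq_zero]
    split_ifs <;> simp [hN]
  rw [hsum]
  have hψ (x : ZMod N) : ‖ψ x‖ = 1 := Circle.norm_coe _
  refine ((isSchurMultiplierBound_sum _ fun s _ => ((isSchurMultiplierBound_vecMulVec
    (fun i => (hψ (s * p i)).le) fun j => (hψ (-(s * q j))).le).smul _)).smul _).mono ?_
  simp [hψ, NeZero.ne]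

end SchurMultiplier

/-- The kernel whose unnormalized Fourier coefficients `∫₀^{2π} ψ(θ) e^{-ilθ} dθ` are
`(k + l i)⁻¹`, `l ∈ ℤ` (with `0⁻¹ = 0` when `k = l = 0`). -/
noncomputable def invKernel (k : ℤ) (θ : ℝ) : ℝ :=
  if k = 0 then 1 / 2 - θ / (2 * π) else Real.exp (-k * θ) / (1 - Real.exp (-(2 * π * k)))

theorem continuous_invKernel (k : ℤ) : Continuous (invKernel k) := by
  unfold invKernel; split_ifs <;> fun_prop

theorem cexp_neg_intCast_add_mul_I_mul_two_pi (k l : ℤ) :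
    cexp (-(k + l * I) * (2 * π : ℝ)) = Real.exp (-(2 * π * k)) := by
  rw [ofReal_exp, Complex.exp_eq_exp_iff_exists_int]
  exact ⟨-l, by push_cast; ring⟩

theorem integral_sawtooth_mul_cexp (l : ℤ) :
    ∫ θ in (0 : ℝ)..2 * π, ((1 / 2 - θ / (2 * π) : ℝ) : ℂ) * cexp (-(l * θ * I)) =
      ((l : ℂ) * I)⁻¹ := by
  have hπ : (π : ℂ) ≠ 0 := ofReal_ne_zero.mpr pi_ne_zero
  rcases eq_or_ne l 0 with rfl | hl
  · simp only [Int.cast_zero, zero_mul, neg_zero, Complex.exp_zero, mul_one, _root_.inv_zero]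
    rw [intervalIntegral.integral_ofReal, intervalIntegral.integral_sub intervalIntegrable_const
      (intervalIntegral.intervalIntegrable_id.div_const _)]
    simp only [intervalIntegral.integral_const, intervalIntegral.integral_div, integral_id,
      smul_eq_mul, sub_zero]
    push_cast
    field_simp
    ring
  set c : ℂ := -(l * I)
  have hc : c ≠ 0 := by simp [c, hl, I_ne_zero]
  have hperiod : cexp (c * (2 * π)) = 1 := by
    simpa [c] using cexp_neg_intCast_add_mul_I_mul_two_pi 0 l
  have hderiv (θ : ℝ) : HasDerivAt
      (fun θ : ℝ => cexp (c * θ) * ((1 / 2 - θ / (2 * π)) / c + 1 / (2 * π * c ^ 2)))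
      ((1 / 2 - θ / (2 * π)) * cexp (c * θ)) θ := by
    have h1 : HasDerivAt (fun θ : ℝ => cexp (c * θ)) (c * cexp (c * θ)) θ := by
      simpa [mul_comm] using ((hasDerivAt_id (θ : ℂ)).const_mul c).cexp.comp_ofReal
    have h2 := (((hasDerivAt_id' (θ : ℂ)).div_const (2 * π)).const_sub (1 / 2)).comp_ofReal
      |>.div_const c |>.add_const (1 / (2 * π * c ^ 2))
    refine (h1.mul h2).congr_deriv ?_
    field_simp
    ring
  calc _ = ∫ θ in (0 : ℝ)..2 * π, (1 / 2 - θ / (2 * π)) * cexp (c * θ) := by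
        refine intervalIntegral.integral_congr fun θ _ => ?_
        simp only [c]
        push_cast
        ring_nf
    _ = _ := by
        rw [intervalIntegral.integral_eq_sub_of_hasDerivAt (fun θ _ => hderiv θ)
          (Continuous.intervalIntegrable (by fun_prop) _ _)]
        push_cast
        rw [hperiod, mul_zero, Complex.exp_zero]
        field_simp
        ring

theorem integral_exp_div_mul_cexp {k : ℤ} (hk : k ≠ 0) (l : ℤ) :
    ∫ θ in (0 : ℝ)..2 * π,
      ((Real.exp (-k * θ) / (1 - Real.exp (-(2 * π * k))) : ℝ) : ℂ) * cexp (-(l * θ * I)) =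
      (k + l * I)⁻¹ := by
  have hkl : (k : ℂ) + l * I ≠ 0 := fun h => hk (by simpa using congrArg re h)
  have hD : (1 - Real.exp (-(2 * π * k)) : ℂ) ≠ 0 := by
    rw [sub_ne_zero, ne_comm]
    exact_mod_cast (Real.exp_eq_one_iff _).not.mpr (by simp [pi_ne_zero, hk])
  calc _ = ∫ θ in (0 : ℝ)..2 * π, cexp (-(k + l * I) * θ) / (1 - Real.exp (-(2 * π * k))) := by
        refine intervalIntegral.integral_congr fun θ _ => ?_
        push_cast
        rw [div_mul_eq_mul_div, ← Complex.exp_add]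
        ring_nf
    _ = _ := by
        rw [intervalIntegral.integral_div, integral_exp_mul_complex (neg_ne_zero.mpr hkl),
          cexp_neg_intCast_add_mul_I_mul_two_pi]
        push_cast at hD ⊢
        rw [mul_zero, Complex.exp_zero]
        field_simp
        ring

theorem integral_invKernel_mul_cexp (k l : ℤ) :
    ∫ θ in (0 : ℝ)..2 * π, (invKernel k θ : ℂ) * cexp (-(l * θ * I)) = (k + l * I)⁻¹ := by
  rcases eq_or_ne k 0 with rfl | hk
  · simpa [invKernel] using integral_sawtooth_mul_cexp l
  · simpa [invKernel, hk] using integral_exp_div_mul_cexp hk l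

noncomputable def kernelWeight (k : ℤ) : ℝ := if k = 0 then π else |(k : ℝ)|⁻¹

theorem integral_abs_invKernel_le (k : ℤ) :
    ∫ θ in (0 : ℝ)..2 * π, |invKernel k θ| ≤ kernelWeight k := by
  have h2π : (0 : ℝ) ≤ 2 * π := by positivity
  rcases eq_or_ne k 0 with rfl | hk
  · have hbound : ∀ θ ∈ Set.Icc 0 (2 * π), |invKernel 0 θ| ≤ 1 / 2 := by
      intro θ ⟨h0, h1⟩
      have : θ / (2 * π) ≤ 1 := div_le_one_of_le₀ h1 h2π
      simp only [invKernel, if_true, abs_le]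
      constructor <;> linarith [div_nonneg h0 h2π]
    calc _ ≤ ∫ _ in (0 : ℝ)..2 * π, (1 / 2 : ℝ) :=
          intervalIntegral.integral_mono_on h2π
            ((continuous_invKernel 0).abs.intervalIntegrable _ _) intervalIntegrable_const hbound
      _ = kernelWeight 0 := by simp [kernelWeight]; ring
  have hint : ∫ θ in (0 : ℝ)..2 * π, invKernel k θ = (k : ℝ)⁻¹ := by
    have := integral_invKernel_mul_cexp k 0
    simp only [Int.cast_zero, zero_mul, neg_zero, Complex.exp_zero, mul_one, add_zero] at this
    rw [intervalIntegral.integral_ofReal] at this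
    exact ofReal_injective (by push_cast; exact this)
  -- `invKernel k` has constant sign, so `∫ |invKernel k| = |∫ invKernel k| = |k|⁻¹`
  have hsign : (∀ θ, 0 ≤ invKernel k θ) ∨ ∀ θ, invKernel k θ ≤ 0 := by
    simp only [invKernel, if_neg hk]
    rcases le_total 0 (1 - Real.exp (-(2 * π * k))) with h | h
    · exact Or.inl fun θ => div_nonneg (Real.exp_pos _).le h
    · exact Or.inr fun θ => div_nonpos_of_nonneg_of_nonpos (Real.exp_pos _).le h
  rw [kernelWeight, if_neg hk, ← abs_inv]
  rcases hsign with h | h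
  · rw [intervalIntegral.integral_congr fun θ _ => abs_of_nonneg (h θ), hint]
    exact le_abs_self _
  · rw [intervalIntegral.integral_congr fun θ _ => abs_of_nonpos (h θ),
      intervalIntegral.integral_neg, hint]
    exact neg_le_abs _

theorem sum_kernelWeight_Icc (N : ℕ) :
    ∑ k ∈ Finset.Icc (-(N : ℤ)) N, kernelWeight k = π + 2 * harmonic N := by
  induction N with
  | zero => simp [kernelWeight]
  | succ N ih =>
    have hIcc : Finset.Icc (-((N + 1 : ℕ) : ℤ)) (N + 1 : ℕ) =
        insert (-(N + 1 : ℤ)) (insert (N + 1 : ℤ) (Finset.Icc (-(N : ℤ)) N)) := by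
      ext k; simp only [Finset.mem_Icc, Finset.mem_insert]; omega
    rw [hIcc, Finset.sum_insert (by simp only [Finset.mem_insert, Finset.mem_Icc]; omega),
      Finset.sum_insert (by simp), ih, harmonic_succ]
    simp only [kernelWeight]
    rw [if_neg (by omega), if_neg (by omega)]
    push_cast
    rw [abs_neg, abs_of_pos (by positivity)]
    ring

section Fourier

variable {ι κ : Type*} [Fintype ι] [Fintype κ] [DecidableEq ι] [DecidableEq κ]

theorem isSchurMultiplierBound_inv_intCast_add_mul_I (k : ℤ) (b : ι → ℤ) (b' : κ → ℤ) :
    IsSchurMultiplierBound (of fun i j => ((k : ℂ) + (b i - b' j : ℤ) * I)⁻¹) (kernelWeight k) := by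
  set u : ℝ → ι → ℂ := fun θ i => cexp (-(b i * θ * I))
  set v : ℝ → κ → ℂ := fun θ j => cexp (b' j * θ * I)
  have hM : Continuous fun θ : ℝ => (invKernel k θ : ℂ) • vecMulVec (u θ) (v θ) := by
    refine (continuous_ofReal.comp (continuous_invKernel k)).smul
      (Continuous.matrix_vecMulVec ?_ ?_)
    · exact continuous_pi fun i => by fun_prop
    · exact continuous_pi fun j => by fun_prop
  have hrepr : (of fun i j => ((k : ℂ) + (b i - b' j : ℤ) * I)⁻¹) =
      ∫ θ in (0 : ℝ)..2 * π, (invKernel k θ : ℂ) • vecMulVec (u θ) (v θ) := by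
    ext i j
    rw [intervalIntegral_matrix_apply (hM.intervalIntegrable _ _), of_apply,
      ← integral_invKernel_mul_cexp]
    refine intervalIntegral.integral_congr fun θ _ => ?_
    simp only [Matrix.smul_apply, vecMulVec_apply, smul_eq_mul, u, v, ← Complex.exp_add]
    push_cast
    ring_nf
  rw [hrepr]
  refine (isSchurMultiplierBound_intervalIntegral Real.two_pi_pos.le hM
    ((continuous_invKernel k).abs.intervalIntegrable _ _) fun θ _ => ?_).mono
    (integral_abs_invKernel_le k)
  have hunit (x : ℝ) : ‖cexp (x * I)‖ ≤ 1 := (norm_exp_ofReal_mul_I x).le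
  refine ((isSchurMultiplierBound_vecMulVec (fun i => ?_) fun j => ?_).smul _).mono ?_
  · simpa [u] using hunit (-(b i * θ))
  · simpa [v] using hunit (b' j * θ)
  · rw [mul_one, norm_real, Real.norm_eq_abs]

end Fourier

theorem intCast_zmod_eq_intCast_iff_of_abs_le {N : ℕ} {x y : ℤ} (hx : |x| ≤ N) (hy : |y| ≤ N) :
    (x : ZMod (2 * N + 1)) = y ↔ x = y := by
  refine ⟨fun h => ?_, congrArg _⟩
  rw [ZMod.intCast_eq_intCast_iff_dvd_sub] at h
  rw [abs_le] at hx hy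
  have := Int.eq_zero_of_abs_lt_dvd h (by push_cast; rw [abs_lt]; constructor <;> linarith)
  linarith

section CauchyMatrix

variable {ι : Type*}

/-- The diagonal entries are `0⁻¹ = 0`. -/
noncomputable def cauchyMatrix (d : ι → ℂ) : Matrix ι ι ℂ := of fun i j => (d i - d j)⁻¹

theorem cauchyMatrix_div_const (z : ι → ℂ) (c : ℂ) :
    cauchyMatrix (fun i => z i / c) = c • cauchyMatrix z := by
  ext i j
  simp only [cauchyMatrix, of_apply, Matrix.smul_apply, smul_eq_mul]
  rw [← sub_div, inv_div, div_eq_mul_inv]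

variable [Fintype ι] [DecidableEq ι]

theorem diagonal_mul_sub_mul_diagonal_cauchyMatrix_hadamard {d : ι → ℂ}
    (hd : Function.Injective d) {A : Matrix ι ι ℂ} (hA : ∀ i, A i i = 0) :
    diagonal d * (cauchyMatrix d ⊙ A) - (cauchyMatrix d ⊙ A) * diagonal d = A := by
  ext i j
  simp only [Matrix.sub_apply, diagonal_mul, mul_diagonal, hadamard_apply, cauchyMatrix, of_apply]
  rcases eq_or_ne i j with rfl | hij
  · simp [hA]
  · have : d i - d j ≠ 0 := sub_ne_zero.mpr (hd.ne hij)
    field_simp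

theorem isSchurMultiplierBound_cauchyMatrix_intCast_add_intCast_mul_I {N : ℕ} (p b : ι → ℤ)
    (hp : ∀ i, 0 ≤ p i ∧ p i ≤ N) :
    IsSchurMultiplierBound (cauchyMatrix fun i => (p i : ℂ) + b i * I) (π + 2 * harmonic N) := by
  have hdecomp : cauchyMatrix (fun i => (p i : ℂ) + b i * I) =
      ∑ k ∈ Finset.Icc (-(N : ℤ)) N,
        (of fun i j => if (p i : ZMod (2 * N + 1)) - p j = k then (1 : ℂ) else 0) ⊙
          of fun i j => ((k : ℂ) + (b i - b j : ℤ) * I)⁻¹ := by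
    ext i j
    have hmem : p i - p j ∈ Finset.Icc (-(N : ℤ)) N := by
      rw [Finset.mem_Icc]; constructor <;> linarith [hp i, hp j]
    rw [Matrix.sum_apply, Finset.sum_eq_single_of_mem _ hmem fun k hk hne => ?_]
    · simp only [cauchyMatrix, hadamard_apply, of_apply, Int.cast_sub, if_true, one_mul]
      ring_nf
    · rw [Finset.mem_Icc, ← abs_le] at hk hmem
      have : (p i : ZMod (2 * N + 1)) - p j ≠ k := by
        rw [← Int.cast_sub, Ne, intCast_zmod_eq_intCast_iff_of_abs_le hmem hk]
        exact hne.symm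
      simp [this]
  rw [hdecomp, ← sum_kernelWeight_Icc]
  refine (isSchurMultiplierBound_sum _ fun k _ =>
    (isSchurMultiplierBound_indicator_sub_eq _ _ _).hadamard
      (isSchurMultiplierBound_inv_intCast_add_mul_I k b b) zero_le_one).mono ?_
  simp

end CauchyMatrix

noncomputable def gridPoint (n i : ℕ) : ℂ := ((i / n : ℕ) + (i % n : ℕ) * I) / n

theorem gridPoint_mem_Qsq {n i : ℕ} (hi : i < n * n) : gridPoint n i ∈ Qsq := by
  have hn : 0 < n := Nat.pos_of_ne_zero (by rintro rfl; simp at hi)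
  have h1 : i / n ≤ n := (Nat.div_lt_of_lt_mul hi).le
  have h2 : i % n ≤ n := (Nat.mod_lt i hn).le
  simp only [Qsq, Set.mem_ofPred_eq, gridPoint, div_natCast_re, div_natCast_im, add_re, add_im,
    natCast_re, natCast_im, mul_re, mul_im, I_re, I_im, mul_zero, mul_one, sub_self, add_zero,
    zero_add]
  constructor <;> rw [abs_of_nonneg (by positivity), div_le_one (by exact_mod_cast hn)] <;>
    exact_mod_cast ‹_›

theorem gridPoint_injective {n : ℕ} (hn : n ≠ 0) : Function.Injective (gridPoint n) := by
  intro i j h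
  simp only [gridPoint, div_left_inj' (Nat.cast_ne_zero.mpr hn : (n : ℂ) ≠ 0)] at h
  have hre : i / n = j / n := by simpa using congrArg re h
  have him : i % n = j % n := by simpa using congrArg im h
  rw [← Nat.div_add_mod i n, ← Nat.div_add_mod j n, hre, him]

theorem isSchurMultiplierBound_cauchyMatrix_gridPoint {m N : ℕ} (hm : m ≤ (N + 1) * (N + 1)) :
    IsSchurMultiplierBound (cauchyMatrix fun i : Fin m => gridPoint (N + 1) i)
      ((N + 1 : ℕ) * (π + 2 * harmonic N)) := by
  set n := N + 1
  have hp (i : Fin m) : 0 ≤ (((i : ℕ) / n : ℕ) : ℤ) ∧ (((i : ℕ) / n : ℕ) : ℤ) ≤ N :=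
    ⟨Int.natCast_nonneg _,
      by exact_mod_cast Nat.lt_succ_iff.mp (Nat.div_lt_of_lt_mul (i.2.trans_le hm))⟩
  have hgrid : (fun i : Fin m => gridPoint n i) = fun i : Fin m =>
      (((((i : ℕ) / n : ℕ) : ℤ) : ℂ) + ((((i : ℕ) % n : ℕ) : ℤ) : ℂ) * I) / (n : ℕ) := by
    funext i; simp only [gridPoint, Int.cast_natCast]
  rw [hgrid, cauchyMatrix_div_const]
  simpa using (isSchurMultiplierBound_cauchyMatrix_intCast_add_intCast_mul_I _
    (fun i : Fin m => (((i : ℕ) % n : ℕ) : ℤ)) hp).smul ((n : ℕ) : ℂ)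

theorem natSqrt_succ_mul_harmonic_le {m : ℕ} (hm : 2 ≤ m) :
    ((m.sqrt + 1 : ℕ) : ℝ) * (π + 2 * harmonic m.sqrt) ≤ 112 * Real.log m ^ 3 * √m := by
  set N := m.sqrt
  set L := Real.log m
  have hN : 1 ≤ N := Nat.sqrt_pos.mpr (by omega)
  have hL : 1 / 2 ≤ L := by
    have := Real.log_le_log (by norm_num) (by exact_mod_cast hm : (2 : ℝ) ≤ m)
    linarith [Real.log_two_gt_d9]
  have hharm : (harmonic N : ℝ) ≤ 1 + L := by
    have := harmonic_le_one_add_log N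
    have : Real.log N ≤ L :=
      Real.log_le_log (by positivity) (by exact_mod_cast Nat.sqrt_le_self m)
    linarith
  have hn : ((N + 1 : ℕ) : ℝ) ≤ 2 * √m := by
    have : (1 : ℝ) ≤ N := by exact_mod_cast hN
    push_cast
    linarith [Real.nat_sqrt_le_real_sqrt (a := m)]
  have hL3 : L ≤ 4 * L ^ 3 := by
    nlinarith [mul_nonneg (mul_nonneg (by linarith : 0 ≤ L) (by linarith : 0 ≤ 2 * L - 1))
      (by linarith : 0 ≤ 2 * L + 1)]
  have hsum : π + 2 * harmonic N ≤ 56 * L ^ 3 := by linarith [Real.pi_le_four]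
  have hsum0 : 0 ≤ π + 2 * harmonic N := by
    have : (0 : ℝ) < harmonic N := by exact_mod_cast harmonic_pos (by omega)
    linarith [Real.pi_pos]
  calc ((N + 1 : ℕ) : ℝ) * (π + 2 * harmonic N) ≤ (2 * √m) * (56 * L ^ 3) :=
        mul_le_mul hn hsum hsum0 (by positivity)
    _ = 112 * L ^ 3 * √m := by ring

/-- There is an absolute K > 0 such that for every m ≥ 2 there is a single m×m diagonal
matrix B with diagonal entries in Q such that every zero-diagonal A is [B,C] with
‖C‖ ≤ K · (log m)³ · √m · ‖A‖. -/
theorem stmt3 :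
    ∃ K : ℝ, 0 < K ∧ ∀ (m : ℕ), 2 ≤ m →
      ∃ d : Fin m → ℂ, (∀ i, d i ∈ Qsq) ∧
        ∀ A : Matrix (Fin m) (Fin m) ℂ, (∀ i, A i i = 0) →
          ∃ C : Matrix (Fin m) (Fin m) ℂ,
            A = Matrix.diagonal d * C - C * Matrix.diagonal d ∧
            opNorm C ≤ K * (Real.log m) ^ 3 * Real.sqrt m * opNorm A := by
  refine ⟨112, by norm_num, fun m hm => ?_⟩
  have hmN : m ≤ (m.sqrt + 1) * (m.sqrt + 1) := (Nat.lt_succ_sqrt m).le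
  set d : Fin m → ℂ := fun i => gridPoint (m.sqrt + 1) i
  refine ⟨d, fun i => gridPoint_mem_Qsq (i.2.trans_le hmN), fun A hA => ⟨cauchyMatrix d ⊙ A,
    (diagonal_mul_sub_mul_diagonal_cauchyMatrix_hadamard
      ((gridPoint_injective m.sqrt.succ_ne_zero).comp Fin.val_injective) hA).symm, ?_⟩⟩
  calc ‖cauchyMatrix d ⊙ A‖ ≤ ((m.sqrt + 1 : ℕ) * (π + 2 * harmonic m.sqrt)) * ‖A‖ :=
        isSchurMultiplierBound_cauchyMatrix_gridPoint hmN A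
    _ ≤ 112 * Real.log m ^ 3 * √m * ‖A‖ :=
        mul_le_mul_of_nonneg_right (natSqrt_succ_mul_harmonic_le hm) (norm_nonneg A)
end

section
/- Let 0 < ε < 1 and let m be a positive integer. Let A be a 4m×4m complex matrix, regarded as a 4×4 block matrix (A_{ij})_{1≤i,j≤4} with blocks of size m×m. Suppose that for each i ∈ {1,2,3,4} there exist an m×m diagonal matrix B_i with all diagonal entries in the square Q and an m×m matrix C_i such that A_{ii} = B_i C_i − C_i B_i. Then there exist a 4m×4m diagonal matrix B with all diagonal entries in Q and a 4m×4m matrix C such that A = BC − CB and ‖C‖ ≤ (2/(1−ε)) · max_{1≤i≤4} ‖C_i‖ + 6‖A‖/ε². -/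
/-!
On the `i`-th block take `d = ((1 - ε)/2) Bᵢ + ((1 + ε)/2) cᵢ`, where `c₀, …, c₃` are the four
corners `±1 ± i` of `Q`; then `d` takes values in `Q`. On a diagonal block, commuting with `d` is
`(1 - ε)/2` times commuting with `Bᵢ`, so that block of `C` is `(2/(1 - ε)) Cᵢ`. For `i ≠ j`
some power `μ` of the imaginary unit sends `cᵢ` to real part `1` and `cⱼ` to real part `-1`, hence
`Re (μ d) ≥ ε` on block `i` and `Re (μ d) ≤ -ε` on block `j`; the solution of the Sylvester
equation `dᵢ X - X dⱼ = Aᵢⱼ` then has norm at most `‖A‖/(2ε²)`. The block-diagonal part costs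
`(2/(1 - ε)) maxᵢ ‖Cᵢ‖` and the twelve off-diagonal blocks `6‖A‖/ε²`.
-/

open Matrix Complex
open scoped Matrix.Norms.L2Operator

lemma opNorm_eq {ι κ : Type*} [Fintype ι] [Fintype κ] [DecidableEq κ] (A : Matrix ι κ ℂ) :
    opNorm A = ‖A‖ :=
  rfl

section Blocks

variable {n m : Type*} [Fintype n] [Fintype m] [DecidableEq n] [DecidableEq m]

variable (m) in
def blockInclusion (i : n) : Matrix (n × m) m ℂ :=
  (1 : Matrix (n × m) (n × m) ℂ).submatrix id (Prod.mk i)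

lemma conjTranspose_blockInclusion_mul_mul (i j : n) (M : Matrix (n × m) (n × m) ℂ) :
    (blockInclusion m i)ᴴ * M * blockInclusion m j = M.submatrix (Prod.mk i) (Prod.mk j) := by
  ext s t
  simp [blockInclusion, Matrix.mul_apply, one_apply]

lemma norm_blockInclusion_le_one (i : n) : ‖blockInclusion m i‖ ≤ 1 := by
  -- C*-identity: `‖J‖ * ‖J‖ = ‖Jᴴ * J‖ = ‖1‖`.
  have h := l2_opNorm_conjTranspose_mul_self (blockInclusion m i)
  rw [← Matrix.mul_one (blockInclusion m i)ᴴ, conjTranspose_blockInclusion_mul_mul,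
    submatrix_one _ (Prod.mk_right_injective i), ← diagonal_one, l2_opNorm_diagonal] at h
  have h1 : ‖blockInclusion m i‖ * ‖blockInclusion m i‖ ≤ 1 :=
    h ▸ (pi_norm_const_le (1 : ℂ)).trans norm_one.le
  nlinarith [norm_nonneg (blockInclusion m i)]

lemma norm_mul_mul_le_of_norm_le_one {k l : Type*} [Fintype k] [Fintype l] [DecidableEq l]
    {P : Matrix k n ℂ} {X : Matrix n m ℂ} {Q : Matrix m l ℂ} (hP : ‖P‖ ≤ 1) (hQ : ‖Q‖ ≤ 1) :
    ‖P * X * Q‖ ≤ ‖X‖ :=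
  calc ‖P * X * Q‖ ≤ ‖P‖ * ‖X‖ * ‖Q‖ :=
        (l2_opNorm_mul _ _).trans (mul_le_mul_of_nonneg_right (l2_opNorm_mul _ _) (norm_nonneg _))
    _ ≤ 1 * ‖X‖ * 1 := by gcongr
    _ = ‖X‖ := by ring

lemma norm_submatrix_prodMk_le (M : Matrix (n × m) (n × m) ℂ) (i j : n) :
    ‖M.submatrix (Prod.mk i) (Prod.mk j)‖ ≤ ‖M‖ := by
  rw [← conjTranspose_blockInclusion_mul_mul]
  exact norm_mul_mul_le_of_norm_le_one
    (by rw [l2_opNorm_conjTranspose]; exact norm_blockInclusion_le_one i)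
    (norm_blockInclusion_le_one j)

lemma norm_blockInclusion_mul_mul_conjTranspose_le (i j : n) (X : Matrix m m ℂ) :
    ‖blockInclusion m i * X * (blockInclusion m j)ᴴ‖ ≤ ‖X‖ :=
  norm_mul_mul_le_of_norm_le_one (norm_blockInclusion_le_one i)
    (by rw [l2_opNorm_conjTranspose]; exact norm_blockInclusion_le_one j)

omit [Fintype n] in
lemma blockInclusion_mul_mul_conjTranspose_apply (i j : n) (X : Matrix m m ℂ) (p q : n × m) :
    (blockInclusion m i * X * (blockInclusion m j)ᴴ) p q =
      if p.1 = i ∧ q.1 = j then X p.2 q.2 else 0 := by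
  rw [blockInclusion, blockInclusion, conjTranspose_submatrix, conjTranspose_one]
  obtain ⟨a, s⟩ := p; obtain ⟨b, t⟩ := q
  simp only [Matrix.mul_apply, submatrix_apply, one_apply, id, Prod.mk.injEq]
  by_cases ha : a = i
  · by_cases hb : b = j
    · simp [ha, hb, eq_comm]
    · simp [ha, hb, Ne.symm hb]
  · simp [ha]

def blockDiagOf (N : n → Matrix m m ℂ) : Matrix (n × m) (n × m) ℂ :=
  of fun p q => if p.1 = q.1 then N p.1 p.2 q.2 else 0

lemma norm_blockDiagOf_le (N : n → Matrix m m ℂ) {a : ℝ} (ha : 0 ≤ a) (h : ∀ i, ‖N i‖ ≤ a) :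
    ‖blockDiagOf N‖ ≤ a := by
  set T := toEuclideanCLM (n := n × m) (𝕜 := ℂ) (blockDiagOf N)
  rw [← l2_opNorm_toEuclideanCLM]
  refine T.opNorm_le_bound ha fun x => (sq_le_sq₀ (by positivity) (by positivity)).mp ?_
  set row : n → EuclideanSpace ℂ m := fun i => WithLp.toLp 2 fun t => x (i, t)
  have hrow : ∀ i s, T x (i, s) = toEuclideanCLM (n := m) (𝕜 := ℂ) (N i) (row i) s := by
    intro i s
    simp [T, ofLp_toEuclideanCLM, blockDiagOf, row, mulVec, dotProduct, Fintype.sum_prod_type]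
  have hx : ‖x‖ ^ 2 = ∑ i, ‖row i‖ ^ 2 := by
    simp [EuclideanSpace.norm_sq_eq, Fintype.sum_prod_type, row]
  calc ‖T x‖ ^ 2 = ∑ i, ‖toEuclideanCLM (n := m) (𝕜 := ℂ) (N i) (row i)‖ ^ 2 := by
        simp [EuclideanSpace.norm_sq_eq, Fintype.sum_prod_type, hrow]
    _ ≤ ∑ i, (a * ‖row i‖) ^ 2 := by
        gcongr with i
        exact (ContinuousLinearMap.le_opNorm _ _).trans (by gcongr; exact h i)
    _ = (a * ‖x‖) ^ 2 := by simp [mul_pow, hx, Finset.mul_sum]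

lemma eq_blockDiagOf_add_sum_offDiag (M : Matrix (n × m) (n × m) ℂ) :
    M = blockDiagOf (fun i => M.submatrix (Prod.mk i) (Prod.mk i)) +
      ∑ ij ∈ Finset.univ.offDiag,
        blockInclusion m ij.1 * M.submatrix (Prod.mk ij.1) (Prod.mk ij.2) *
          (blockInclusion m ij.2)ᴴ := by
  ext ⟨a, s⟩ ⟨b, t⟩
  simp only [Matrix.add_apply, Matrix.sum_apply, blockInclusion_mul_mul_conjTranspose_apply,
    blockDiagOf, of_apply, submatrix_apply]
  by_cases h : a = b
  · subst h
    rw [if_pos rfl, Finset.sum_eq_zero fun ij hij => if_neg ?_, add_zero]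
    rintro ⟨rfl, h⟩
    exact (Finset.mem_offDiag.mp hij).2.2 h
  · rw [if_neg h, zero_add, Finset.sum_eq_single_of_mem (a, b) (by simpa using h)]
    · simp
    · rintro ⟨i, j⟩ - hij
      rw [if_neg]
      rintro ⟨rfl, rfl⟩
      exact hij rfl

lemma norm_le_of_norm_submatrix_le (M : Matrix (n × m) (n × m) ℂ) {a b : ℝ} (ha : 0 ≤ a)
    (hdiag : ∀ i, ‖M.submatrix (Prod.mk i) (Prod.mk i)‖ ≤ a)
    (hoff : ∀ i j, i ≠ j → ‖M.submatrix (Prod.mk i) (Prod.mk j)‖ ≤ b) :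
    ‖M‖ ≤ a + (Fintype.card n * (Fintype.card n - 1) : ℕ) * b := by
  rw [eq_blockDiagOf_add_sum_offDiag M]
  refine (norm_add_le _ _).trans (add_le_add (norm_blockDiagOf_le _ ha hdiag) ?_)
  refine (norm_sum_le _ _).trans ?_
  calc _ ≤ ∑ ij ∈ (Finset.univ : Finset n).offDiag, b := Finset.sum_le_sum fun ij hij =>
        (norm_blockInclusion_mul_mul_conjTranspose_le _ _ _).trans
          (hoff _ _ (Finset.mem_offDiag.mp hij).2.2)
    _ = _ := by simp [Finset.offDiag_card, Nat.mul_sub_one]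

end Blocks

lemma norm_diagonal_le {ι : Type*} [Fintype ι] [DecidableEq ι] {v : ι → ℂ} {c : ℝ} (hc : 0 ≤ c)
    (hv : ∀ i, ‖v i‖ ≤ c) : ‖diagonal v‖ ≤ c := by
  rw [l2_opNorm_diagonal]
  exact (pi_norm_le_iff_of_nonneg hc).mpr hv

section Sylvester

variable {ι κ : Type*} [Fintype ι] [Fintype κ] [DecidableEq ι] [DecidableEq κ]

lemma mul_norm_div_sub_le {ε l : ℝ} (hε : 0 < ε) (hl : 1 ≤ l) (d : ι → ℂ) (e : κ → ℂ)
    (A : Matrix ι κ ℂ) (hd : ∀ s, ε ≤ (d s).re) (he : ∀ t, e t ∈ Qsq ∧ (e t).re ≤ -ε) :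
    (l + ε - √((l - ε) ^ 2 + 1)) * ‖of fun s t => A s t / (d s - e t)‖ ≤ ‖A‖ := by
  set X : Matrix ι κ ℂ := of fun s t => A s t / (d s - e t)
  have hdl : ∀ s, l + ε ≤ ‖d s + l‖ := fun s => by
    have := Complex.re_le_norm (d s + l)
    simp only [Complex.add_re, Complex.ofReal_re] at this
    linarith [hd s]
  have hel : ∀ t, ‖e t + l‖ ≤ √((l - ε) ^ 2 + 1) := fun t => by
    obtain ⟨⟨hre, him⟩, hneg⟩ := he t
    rw [abs_le] at hre
    rw [Complex.norm_eq_sqrt_sq_add_sq]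
    refine Real.sqrt_le_sqrt (add_le_add ?_ ?_)
    · simp only [Complex.add_re, Complex.ofReal_re]
      nlinarith
    · simpa using (sq_le_one_iff_abs_le_one _).mpr him
  -- `(d s + l) X s t = A s t + X s t (e t + l)` because `(d s - e t) X s t = A s t`.
  have hsylv : X = diagonal (fun s => (d s + l)⁻¹) * A +
      diagonal (fun s => (d s + l)⁻¹) * X * diagonal (fun t => e t + l) := by
    ext s t
    have hst : d s - e t ≠ 0 := fun h => by
      have := congrArg Complex.re h
      simp at this
      linarith [hd s, (he t).2]
    have hs : d s + l ≠ 0 := fun h => by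
      have := hdl s
      rw [h, norm_zero] at this
      linarith
    simp only [X, Matrix.add_apply, diagonal_mul, mul_diagonal, of_apply]
    field_simp
    ring
  have hP : ‖diagonal fun s => (d s + l)⁻¹‖ ≤ (l + ε)⁻¹ :=
    norm_diagonal_le (by positivity) fun s => by
      rw [norm_inv]; exact inv_anti₀ (by positivity) (hdl s)
  have hQ : ‖diagonal fun t => e t + l‖ ≤ √((l - ε) ^ 2 + 1) :=
    norm_diagonal_le (by positivity) hel
  have hlε : 0 < l + ε := by linarith
  have hX : ‖X‖ ≤ (‖A‖ + ‖X‖ * √((l - ε) ^ 2 + 1)) / (l + ε) := by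
    calc ‖X‖ ≤ _ := hsylv ▸ norm_add_le _ _
      _ ≤ _ := add_le_add (l2_opNorm_mul _ _) ((l2_opNorm_mul _ _).trans
          (mul_le_mul_of_nonneg_right (l2_opNorm_mul _ _) (norm_nonneg _)))
      _ ≤ (l + ε)⁻¹ * ‖A‖ + (l + ε)⁻¹ * ‖X‖ * √((l - ε) ^ 2 + 1) := by gcongr
      _ = _ := by ring
  rw [le_div_iff₀ hlε] at hX
  linarith

lemma norm_div_sub_le {ε : ℝ} (hε0 : 0 < ε) (hε1 : ε < 1) (d : ι → ℂ) (e : κ → ℂ)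
    (A : Matrix ι κ ℂ) (hd : ∀ s, ε ≤ (d s).re) (he : ∀ t, e t ∈ Qsq ∧ (e t).re ≤ -ε) :
    ‖of fun s t => A s t / (d s - e t)‖ ≤ ‖A‖ / (2 * ε ^ 2) := by
  -- The shift `l = ε + u` makes `l + ε - √((l - ε)² + 1) ≥ 2ε - 1/(2u) = 2ε²`.
  set u := (4 * ε * (1 - ε))⁻¹
  have hu : 1 ≤ u := one_le_inv₀ (by nlinarith) |>.mpr (by nlinarith [sq_nonneg (2 * ε - 1)])
  have hu' : u * (4 * ε * (1 - ε)) = 1 := inv_mul_cancel₀ (by nlinarith)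
  have hsqrt : √(u ^ 2 + 1) ≤ u + 2 * ε * (1 - ε) :=
    Real.sqrt_le_left (by nlinarith) |>.mpr (by nlinarith [sq_nonneg (2 * ε * (1 - ε))])
  have key := mul_norm_div_sub_le hε0 (l := ε + u) (by linarith) d e A hd he
  rw [add_sub_cancel_left] at key
  rw [le_div_iff₀ (by positivity)]
  nlinarith [norm_nonneg (of fun s t => A s t / (d s - e t))]

lemma norm_div_sub_le_of_rotation {ε : ℝ} (hε0 : 0 < ε) (hε1 : ε < 1) (d : ι → ℂ) (e : κ → ℂ)
    (A : Matrix ι κ ℂ) {μ : ℂ} (hμ : ‖μ‖ = 1) (hd : ∀ s, ε ≤ (μ * d s).re)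
    (he : ∀ t, μ * e t ∈ Qsq ∧ (μ * e t).re ≤ -ε) :
    ‖of fun s t => A s t / (d s - e t)‖ ≤ ‖A‖ / (2 * ε ^ 2) := by
  have hμ0 : μ ≠ 0 := norm_ne_zero_iff.mp (by rw [hμ]; exact one_ne_zero)
  have hrot : (of fun s t => A s t / (d s - e t)) =
      of fun s t => (μ • A) s t / (μ * d s - μ * e t) := by
    ext s t
    rw [of_apply, of_apply, Matrix.smul_apply, smul_eq_mul, ← mul_sub, mul_div_mul_left _ _ hμ0]
  rw [hrot]
  simpa [norm_smul, hμ] using norm_div_sub_le hε0 hε1 _ _ (μ • A) hd he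

end Sylvester

lemma convex_Qsq : Convex ℝ Qsq := by
  have h : Qsq = reLm ⁻¹' Set.Icc (-1) 1 ∩ imLm ⁻¹' Set.Icc (-1) 1 := by
    ext z; simp [Qsq, abs_le]
  rw [h]
  exact ((convex_Icc _ _).linear_preimage _).inter ((convex_Icc _ _).linear_preimage _)

lemma I_pow_mul_mem_Qsq {z : ℂ} (hz : z ∈ Qsq) (k : ℕ) : I ^ k * z ∈ Qsq := by
  induction k with
  | zero => simpa using hz
  | succ k ih =>
    obtain ⟨hre, him⟩ := ih
    rw [pow_succ', mul_assoc]
    exact ⟨by rwa [I_mul_re, abs_neg], by rwa [I_mul_im]⟩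

def corner : Fin 4 → ℂ := ![1 + I, 1 - I, -1 + I, -1 - I]

lemma corner_mem_Qsq (i : Fin 4) : corner i ∈ Qsq := by
  fin_cases i <;> simp [corner, Qsq]

lemma exists_I_pow_separating_corners {i j : Fin 4} (hij : i ≠ j) :
    ∃ k : ℕ, (I ^ k * corner i).re = 1 ∧ (I ^ k * corner j).re = -1 := by
  fin_cases i <;> fin_cases j <;> simp only [ne_eq, not_true_eq_false] at hij <;>
    first
    | (refine ⟨0, ?_⟩; simp [corner]; done)
    | (refine ⟨1, ?_⟩; simp [corner]; done)
    | (refine ⟨2, ?_⟩; simp [corner]; done)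
    | (refine ⟨3, ?_⟩; simp [corner, pow_succ])

noncomputable def cornerShift (ε : ℝ) (i : Fin 4) (z : ℂ) : ℂ :=
  ((1 - ε) / 2) • z + ((1 + ε) / 2) • corner i

lemma cornerShift_mem_Qsq {ε : ℝ} (h₁ : -1 ≤ ε) (h₂ : ε ≤ 1) (i : Fin 4) {z : ℂ}
    (hz : z ∈ Qsq) : cornerShift ε i z ∈ Qsq :=
  convex_Qsq hz (corner_mem_Qsq i) (by linarith) (by linarith) (by ring)

lemma diagonal_mul_sub_mul_diagonal_apply {ι R : Type*} [Fintype ι] [DecidableEq ι] [CommRing R]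
    (d : ι → R) (X : Matrix ι ι R) (i j : ι) :
    (diagonal d * X - X * diagonal d) i j = (d i - d j) * X i j := by
  rw [Matrix.sub_apply, diagonal_mul, mul_diagonal]
  ring

section BlockSolution

variable {n m : Type*} [Fintype n] [Fintype m] [DecidableEq n] [DecidableEq m]

def BlocksSeparated (ε : ℝ) (d : n × m → ℂ) : Prop :=
  ∀ i j, i ≠ j → ∃ μ : ℂ, ‖μ‖ = 1 ∧ (∀ s, ε ≤ (μ * d (i, s)).re) ∧
    ∀ t, μ * d (j, t) ∈ Qsq ∧ (μ * d (j, t)).re ≤ -ε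

omit [Fintype n] [Fintype m] [DecidableEq n] [DecidableEq m] in
lemma BlocksSeparated.ne {ε : ℝ} {d : n × m → ℂ} (h : BlocksSeparated ε d) (hε : 0 < ε)
    {p q : n × m} (hpq : p.1 ≠ q.1) : d p ≠ d q := by
  obtain ⟨μ, -, hi, hj⟩ := h p.1 q.1 hpq
  intro hdpq
  have := hi p.2
  rw [show d (p.1, p.2) = d (q.1, q.2) from hdpq] at this
  linarith [(hj q.2).2]

omit [Fintype m] [DecidableEq m] in
lemma blocksSeparated_cornerShift {ε : ℝ} (h₁ : -1 ≤ ε) (h₂ : ε ≤ 1) {B : Fin 4 → m → ℂ}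
    (hB : ∀ i s, B i s ∈ Qsq) :
    BlocksSeparated ε fun p : Fin 4 × m => cornerShift ε p.1 (B p.1 p.2) := by
  intro i j hij
  obtain ⟨k, hi, hj⟩ := exists_I_pow_separating_corners hij
  have hre : ∀ l z, (I ^ k * cornerShift ε l z).re =
      (1 - ε) / 2 * (I ^ k * z).re + (1 + ε) / 2 * (I ^ k * corner l).re := fun l z => by
    simp only [cornerShift, mul_add, mul_smul_comm, add_re, smul_re, smul_eq_mul]
  refine ⟨I ^ k, by simp, fun s => ?_, fun t => ⟨?_, ?_⟩⟩
  · have := abs_le.mp (I_pow_mul_mem_Qsq (hB i s) k).1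
    rw [hre, hi]
    nlinarith
  · exact I_pow_mul_mem_Qsq (cornerShift_mem_Qsq h₁ h₂ j (hB j t)) k
  · have := abs_le.mp (I_pow_mul_mem_Qsq (hB j t) k).1
    rw [hre, hj]
    nlinarith

noncomputable def blockSolution (κ : ℂ) (C : n → Matrix m m ℂ) (A : Matrix (n × m) (n × m) ℂ)
    (d : n × m → ℂ) : Matrix (n × m) (n × m) ℂ :=
  of fun p q => if p.1 = q.1 then κ * C p.1 p.2 q.2 else A p q / (d p - d q)

lemma diagonal_mul_blockSolution_sub {κ : ℂ} {C : n → Matrix m m ℂ} {B : n → m → ℂ}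
    {A : Matrix (n × m) (n × m) ℂ} {d : n × m → ℂ}
    (hblock : ∀ i s t, (d (i, s) - d (i, t)) * κ = B i s - B i t)
    (hne : ∀ p q : n × m, p.1 ≠ q.1 → d p ≠ d q)
    (hcomm : ∀ i, A.submatrix (Prod.mk i) (Prod.mk i) =
      diagonal (B i) * C i - C i * diagonal (B i)) :
    diagonal d * blockSolution κ C A d - blockSolution κ C A d * diagonal d = A := by
  ext ⟨i, s⟩ ⟨j, t⟩
  rw [diagonal_mul_sub_mul_diagonal_apply, blockSolution, of_apply]
  by_cases hij : i = j
  · subst hij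
    have hA := congr_fun (congr_fun (hcomm i) s) t
    rw [submatrix_apply, diagonal_mul_sub_mul_diagonal_apply] at hA
    rw [if_pos rfl, hA, ← hblock]
    ring
  · rw [if_neg hij, mul_div_cancel₀ _ (sub_ne_zero.mpr (hne _ _ hij))]

lemma norm_blockSolution_le {ε : ℝ} (hε0 : 0 < ε) (hε1 : ε < 1) (κ : ℂ) (C : n → Matrix m m ℂ)
    (A : Matrix (n × m) (n × m) ℂ) {d : n × m → ℂ} (hd : BlocksSeparated ε d) :
    ‖blockSolution κ C A d‖ ≤ ‖κ‖ * (⨆ i, ‖C i‖) +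
      (Fintype.card n * (Fintype.card n - 1) : ℕ) * (‖A‖ / (2 * ε ^ 2)) := by
  have hC : ∀ i, ‖C i‖ ≤ ⨆ i, ‖C i‖ := le_ciSup (Set.finite_range _).bddAbove
  refine norm_le_of_norm_submatrix_le _
    (by have := Real.iSup_nonneg fun i => norm_nonneg (C i); positivity) (fun i => ?_)
    (fun i j hij => ?_)
  · have : (blockSolution κ C A d).submatrix (Prod.mk i) (Prod.mk i) = κ • C i := by
      ext s t
      simp [blockSolution]
    rw [this, norm_smul]
    exact mul_le_mul_of_nonneg_left (hC i) (norm_nonneg κ)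
  · obtain ⟨μ, hμ, hi, hj⟩ := hd i j hij
    have : (blockSolution κ C A d).submatrix (Prod.mk i) (Prod.mk j) =
        of fun s t => A (i, s) (j, t) / (d (i, s) - d (j, t)) := by
      ext s t
      simp [blockSolution, hij]
    rw [this]
    refine (norm_div_sub_le_of_rotation hε0 hε1 _ _ _ hμ hi hj).trans ?_
    gcongr
    exact norm_submatrix_prodMk_le A i j

end BlockSolution

theorem stmt5_general (ε : ℝ) (hε0 : 0 < ε) (hε1 : ε < 1) (m : ℕ)
    (A : Matrix (Fin 4 × Fin m) (Fin 4 × Fin m) ℂ)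
    (B : Fin 4 → Fin m → ℂ) (C : Fin 4 → Matrix (Fin m) (Fin m) ℂ)
    (hB : ∀ i s, B i s ∈ Qsq)
    (hcomm : ∀ i, (Matrix.of fun s t => A (i, s) (i, t)) =
      Matrix.diagonal (B i) * C i - C i * Matrix.diagonal (B i)) :
    ∃ (d : Fin 4 × Fin m → ℂ) (C' : Matrix (Fin 4 × Fin m) (Fin 4 × Fin m) ℂ),
      (∀ p, d p ∈ Qsq) ∧
      A = Matrix.diagonal d * C' - C' * Matrix.diagonal d ∧
      opNorm C' ≤ (2 / (1 - ε)) * (⨆ i, opNorm (C i)) + 6 * opNorm A / ε ^ 2 := by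
  have h₁ : -1 ≤ ε := by linarith
  set d : Fin 4 × Fin m → ℂ := fun p => cornerShift ε p.1 (B p.1 p.2)
  have hd : BlocksSeparated ε d := blocksSeparated_cornerShift h₁ hε1.le hB
  have h1ε : (1 - ε : ℂ) ≠ 0 := by exact_mod_cast (sub_pos.mpr hε1).ne'
  refine ⟨d, blockSolution (2 / (1 - ε) : ℝ) C A d,
    fun p => cornerShift_mem_Qsq h₁ hε1.le _ (hB _ _), ?_, ?_⟩
  · refine (diagonal_mul_blockSolution_sub (fun i s t => ?_) (fun p q => hd.ne hε0) hcomm).symm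
    simp only [d, cornerShift, real_smul]
    push_cast
    field_simp
    ring
  · simp only [opNorm_eq]
    refine (norm_blockSolution_le hε0 hε1 _ C A hd).trans_eq ?_
    rw [norm_real, Real.norm_of_nonneg (div_nonneg zero_le_two (by linarith))]
    norm_num
    ring

/-- If each of the four diagonal blocks A_{ii} of a 4m×4m matrix A is a commutator
[Bᵢ, Cᵢ] with Bᵢ diagonal with entries in Q, then A = [B, C] with B diagonal with
entries in Q and ‖C‖ ≤ (2/(1−ε)) · maxᵢ ‖Cᵢ‖ + 6‖A‖/ε². -/
theorem stmt5 (ε : ℝ) (hε0 : 0 < ε) (hε1 : ε < 1) (m : ℕ) (hm : 0 < m)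
    (A : Matrix (Fin 4 × Fin m) (Fin 4 × Fin m) ℂ)
    (B : Fin 4 → Fin m → ℂ) (C : Fin 4 → Matrix (Fin m) (Fin m) ℂ)
    (hB : ∀ i s, B i s ∈ Qsq)
    (hcomm : ∀ i, (Matrix.of fun s t => A (i, s) (i, t)) =
      Matrix.diagonal (B i) * C i - C i * Matrix.diagonal (B i)) :
    ∃ (d : Fin 4 × Fin m → ℂ) (C' : Matrix (Fin 4 × Fin m) (Fin 4 × Fin m) ℂ),
      (∀ p, d p ∈ Qsq) ∧
      A = Matrix.diagonal d * C' - C' * Matrix.diagonal d ∧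
      opNorm C' ≤ (2 / (1 - ε)) * (⨆ i, opNorm (C i)) + 6 * opNorm A / ε ^ 2 :=
  stmt5_general ε hε0 hε1 m A B C hB hcomm
end

section
/- Let m ≥ 2 and let b_1, …, b_m be (not necessarily distinct) points of the square Q. Then there exist indices i ≠ j with |b_i − b_j| ≤ √(32/m). -/
/-! Take `n = ⌊√(m - 1)⌋`, so that `n² < m ≤ 4n²`. Cutting `Q` into `n²` closed cells of side
`2/n`, two of the `m` points fall into the same cell by pigeonhole, and are therefore at distance
at most `2√2/n`, which is at most `√(32/m)` because `m ≤ 4n²`. -/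

/-- `[0, ℓ]` is cut into `n` cells of length `ℓ / n`; the `min` puts the endpoint `ℓ` into the
last cell. -/
noncomputable def cellIndex (n : ℕ) (ℓ x : ℝ) : ℕ := min (n - 1) ⌊x * n / ℓ⌋₊

section cellIndex

variable {n : ℕ} {ℓ x y : ℝ}

lemma cellIndex_lt (hn : 0 < n) : cellIndex n ℓ x < n := by
  unfold cellIndex
  omega

lemma cellIndex_mul_le (hℓ : 0 < ℓ) (hx : 0 ≤ x) : (cellIndex n ℓ x : ℝ) * ℓ ≤ x * n := by
  have hfloor : (⌊x * n / ℓ⌋₊ : ℝ) ≤ x * n / ℓ := Nat.floor_le (by positivity)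
  have hmin : (cellIndex n ℓ x : ℝ) ≤ ⌊x * n / ℓ⌋₊ := by
    exact_mod_cast min_le_right _ _
  rw [← le_div_iff₀ hℓ]
  linarith

lemma mul_le_cellIndex_add_one_mul (hn : 0 < n) (hℓ : 0 < ℓ) (hx : x ≤ ℓ) :
    x * n ≤ (cellIndex n ℓ x + 1) * ℓ := by
  unfold cellIndex
  rcases le_total ⌊x * n / ℓ⌋₊ (n - 1) with hle | hge
  · rw [min_eq_right hle, ← div_le_iff₀ hℓ]
    exact (Nat.lt_floor_add_one _).le
  · rw [min_eq_left hge, Nat.cast_sub (by omega), Nat.cast_one, sub_add_cancel]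
    rw [mul_comm (n : ℝ)]
    exact mul_le_mul_of_nonneg_right hx n.cast_nonneg

lemma abs_sub_le_of_cellIndex_eq (hn : 0 < n) (hℓ : 0 < ℓ) (hx : x ∈ Set.Icc 0 ℓ)
    (hy : y ∈ Set.Icc 0 ℓ) (hxy : cellIndex n ℓ x = cellIndex n ℓ y) : |x - y| ≤ ℓ / n := by
  have hn' : (0 : ℝ) < n := by exact_mod_cast hn
  have hx₁ := cellIndex_mul_le (n := n) hℓ hx.1
  have hx₂ := mul_le_cellIndex_add_one_mul hn hℓ hx.2
  have hy₁ := cellIndex_mul_le (n := n) hℓ hy.1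
  have hy₂ := mul_le_cellIndex_add_one_mul hn hℓ hy.2
  rw [hxy] at hx₁ hx₂
  rw [abs_sub_le_iff, le_div_iff₀ hn', le_div_iff₀ hn']
  constructor <;> linarith

end cellIndex

lemma Complex.norm_sub_le_sqrt_two_mul {z w : ℂ} {d : ℝ} (hre : |z.re - w.re| ≤ d)
    (him : |z.im - w.im| ≤ d) : ‖z - w‖ ≤ √2 * d := by
  refine (Complex.norm_le_sqrt_two_mul_max (z - w)).trans ?_
  rw [Complex.sub_re, Complex.sub_im]
  gcongr
  exact max_le hre him

lemma abs_sub_le_of_cellIndex_eq_of_abs_le_one {n : ℕ} (hn : 0 < n) {x y : ℝ} (hx : |x| ≤ 1)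
    (hy : |y| ≤ 1) (hxy : cellIndex n 2 (x + 1) = cellIndex n 2 (y + 1)) : |x - y| ≤ 2 / n := by
  rw [abs_le] at hx hy
  have h := abs_sub_le_of_cellIndex_eq hn two_pos ⟨by linarith, by linarith⟩
    ⟨by linarith, by linarith⟩ hxy
  rwa [add_sub_add_right_eq_sub] at h

lemma exists_ne_norm_sub_le_of_mem_Qsq {n m : ℕ} (hn : 0 < n) (hnm : n * n < m)
    (b : Fin m → ℂ) (hb : ∀ i, b i ∈ Qsq) : ∃ i j, i ≠ j ∧ ‖b i - b j‖ ≤ √2 * (2 / n) := by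
  let cell : ℂ → Fin n × Fin n := fun z =>
    (⟨cellIndex n 2 (z.re + 1), cellIndex_lt hn⟩, ⟨cellIndex n 2 (z.im + 1), cellIndex_lt hn⟩)
  obtain ⟨i, j, hij, hcell⟩ :=
    Fintype.exists_ne_map_eq_of_card_lt (cell ∘ b) (by simpa using hnm)
  simp only [Function.comp_apply, Prod.mk.injEq, Fin.mk.injEq, cell] at hcell
  exact ⟨i, j, hij, Complex.norm_sub_le_sqrt_two_mul
    (abs_sub_le_of_cellIndex_eq_of_abs_le_one hn (hb i).1 (hb j).1 hcell.1)
    (abs_sub_le_of_cellIndex_eq_of_abs_le_one hn (hb i).2 (hb j).2 hcell.2)⟩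

lemma Nat.exists_pos_sq_lt_le_four_mul_sq {m : ℕ} (hm : 2 ≤ m) :
    ∃ n, 0 < n ∧ n * n < m ∧ m ≤ 4 * (n * n) := by
  refine ⟨Nat.sqrt (m - 1), Nat.sqrt_pos.2 (by omega), ?_, ?_⟩
  · have := Nat.sqrt_le (m - 1)
    omega
  · have hpos : 0 < Nat.sqrt (m - 1) := Nat.sqrt_pos.2 (by omega)
    have hsucc : m ≤ (Nat.sqrt (m - 1) + 1) * (Nat.sqrt (m - 1) + 1) := by
      have := Nat.lt_succ_sqrt (m - 1)
      rw [Nat.succ_eq_add_one] at this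
      omega
    nlinarith

/-- Among any m ≥ 2 points of the square Q, two distinct indices are at distance at
most √(32/m). -/
theorem stmt8 (m : ℕ) (hm : 2 ≤ m) (b : Fin m → ℂ) (hb : ∀ i, b i ∈ Qsq) :
    ∃ i j : Fin m, i ≠ j ∧ ‖b i - b j‖ ≤ Real.sqrt (32 / m) := by
  obtain ⟨n, hn, hnm, hmn⟩ := Nat.exists_pos_sq_lt_le_four_mul_sq hm
  obtain ⟨i, j, hij, hdist⟩ := exists_ne_norm_sub_le_of_mem_Qsq hn hnm b hb
  refine ⟨i, j, hij, hdist.trans ((Real.le_sqrt (by positivity) (by positivity)).2 ?_)⟩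
  have hn' : (0 : ℝ) < n := by exact_mod_cast hn
  have hmn' : (m : ℝ) ≤ 4 * (n * n) := by exact_mod_cast hmn
  have hm' : (0 : ℝ) < m := by positivity
  rw [mul_pow, Real.sq_sqrt zero_le_two, div_pow, le_div_iff₀ hm']
  calc 2 * (2 ^ 2 / (n : ℝ) ^ 2) * m ≤ 2 * (2 ^ 2 / (n : ℝ) ^ 2) * (4 * (n * n)) := by gcongr
    _ = 32 := by field_simp; ring
end
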